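/- Let {u_θ}_{θ∈Θ} and {v_θ}_{θ∈Θ} be linearly independent families spanning H and K respectively, with Gram matrices G_U and G_V. There exists a completely positive subunital map Λ : L(H) → L(K) with Λ(|u_θ⟩⟨u_θ|) = |v_θ⟩⟨v_θ| for all θ if and only if there exists a positive semidefinite matrix H = [H_{θθ'}] with H_{θθ} = 1 for all θ such that G_V^{-1} ≥ H ∘ G_U^{-1}, where ∘ is the Hadamard (entrywise) product and ≥ is the Loewner order. -/

import Mathlib

/-! Let `V` be the matrix with columns `v θ` and `U⁺ = G_U⁻¹ Uᴴ` the coordinate map of the basis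
`u`. A Kraus operator `W` of a map sending `|u_θ⟩⟨u_θ|` to `|v_θ⟩⟨v_θ|` satisfies
`W u_θ = c_θ v_θ`, because a sum of positive rank-one matrices equal to a rank-one matrix consists
of multiples of it; hence `W = V diag(c) U⁺`. For Kraus operators `W_i = V diag(c_i) U⁺` one finds
`∑ W_i W_iᴴ = V (H ∘ G_U⁻¹) Vᴴ` and `Λ(|u_θ⟩⟨u_θ|) = H_θθ |v_θ⟩⟨v_θ|` with `H = ∑ c_i c_iᴴ`,
and every positive semidefinite `H` has this form. Finally `1 - V M Vᴴ ≥ 0 ↔ G_V⁻¹ - M ≥ 0`,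
since conjugations by `V` and by `V⁺ = G_V⁻¹ Vᴴ` are mutually inverse. -/

open Matrix Finset
open scoped ComplexOrder

noncomputable section

/-- The rank-one operator `|u⟩⟨u|` as a matrix: `(outer u) i j = u i * conj (u j)`. -/
def outer {n : ℕ} (u : Fin n → ℂ) : Matrix (Fin n) (Fin n) ℂ :=
  Matrix.vecMulVec u (star u)

/-- A linear map on matrices is completely positive iff it admits a Kraus representation. -/
def IsCPMap {n m : ℕ}
    (Λ : Matrix (Fin n) (Fin n) ℂ →ₗ[ℂ] Matrix (Fin m) (Fin m) ℂ) : Prop :=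
  ∃ (k : ℕ) (W : Fin k → Matrix (Fin m) (Fin n) ℂ),
    ∀ X, Λ X = ∑ i, W i * X * (W i)ᴴ

/-- `Λ` is unital: `Λ(I) = I`. -/
def IsUnital {n m : ℕ}
    (Λ : Matrix (Fin n) (Fin n) ℂ →ₗ[ℂ] Matrix (Fin m) (Fin m) ℂ) : Prop :=
  Λ 1 = 1

/-- `Λ` is subunital: `Λ(I) ≤ I` in the Loewner order. -/
def IsSubunital {n m : ℕ}
    (Λ : Matrix (Fin n) (Fin n) ℂ →ₗ[ℂ] Matrix (Fin m) (Fin m) ℂ) : Prop :=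
  ((1 : Matrix (Fin m) (Fin m) ℂ) - Λ 1).PosSemidef

/-- Gram matrix of a family of vectors. -/
def gram {Θ : Type*} {n : ℕ} (u : Θ → (Fin n → ℂ)) : Matrix Θ Θ ℂ :=
  Matrix.of fun θ θ' => star (u θ) ⬝ᵥ u θ'

/-- Largest real eigenvalue of a matrix (intended for Hermitian matrices). -/
def lamMax {n : ℕ} (A : Matrix (Fin n) (Fin n) ℂ) : ℝ :=
  sSup {r : ℝ | ∃ x : Fin n → ℂ, x ≠ 0 ∧ A.mulVec x = (r : ℂ) • x}

/-- Smallest real eigenvalue of a matrix (intended for Hermitian matrices). -/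
def lamMin {n : ℕ} (A : Matrix (Fin n) (Fin n) ℂ) : ℝ :=
  sInf {r : ℝ | ∃ x : Fin n → ℂ, x ≠ 0 ∧ A.mulVec x = (r : ℂ) • x}

/-- Operator (spectral) norm of a matrix. -/
def opNorm {n : ℕ} (A : Matrix (Fin n) (Fin n) ℂ) : ℝ :=
  ‖Matrix.toEuclideanCLM (𝕜 := ℂ) A‖

section

variable {Θ : Type*} {n m : ℕ}

def colMat (u : Θ → Fin n → ℂ) : Matrix (Fin n) Θ ℂ := (Matrix.of u)ᵀ

lemma colMat_injective : Function.Injective (colMat : (Θ → Fin n → ℂ) → _) :=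
  fun _ _ h => Matrix.of.injective (transpose_injective h)

lemma mul_colMat [Fintype Θ] (W : Matrix (Fin m) (Fin n) ℂ) (u : Θ → Fin n → ℂ) :
    W * colMat u = colMat fun θ => W *ᵥ u θ := by
  ext i θ
  simp [colMat, mul_apply, mulVec, dotProduct]

lemma colMat_mul_diagonal [Fintype Θ] [DecidableEq Θ] (v : Θ → Fin m → ℂ) (d : Θ → ℂ) :
    colMat v * diagonal d = colMat fun θ => d θ • v θ := by
  ext i θ
  simp [colMat, mul_comm]

lemma colMat_mulVec [Fintype Θ] (u : Θ → Fin n → ℂ) (c : Θ → ℂ) :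
    colMat u *ᵥ c = ∑ θ, c θ • u θ := by
  ext i
  simp [colMat, mulVec, dotProduct, mul_comm]

lemma gram_eq_colMat [Fintype Θ] (u : Θ → Fin n → ℂ) : gram u = (colMat u)ᴴ * colMat u := by
  ext θ σ
  simp [_root_.gram, colMat, mul_apply, dotProduct]

lemma posDef_gram [Fintype Θ] {u : Θ → Fin n → ℂ} (hu : LinearIndependent ℂ u) :
    (gram u).PosDef := by
  rw [gram_eq_colMat]
  exact .conjTranspose_mul_self _ (mulVec_injective_iff.mpr hu)

variable [Fintype Θ] [DecidableEq Θ]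

def coordMat (u : Θ → Fin n → ℂ) : Matrix Θ (Fin n) ℂ := (gram u)⁻¹ * (colMat u)ᴴ

lemma inv_gram_mul_gram {u : Θ → Fin n → ℂ} (hu : LinearIndependent ℂ u) :
    (gram u)⁻¹ * gram u = 1 :=
  nonsing_inv_mul _ ((isUnit_iff_isUnit_det _).mp (posDef_gram hu).isUnit)

lemma coordMat_mul_colMat {u : Θ → Fin n → ℂ} (hu : LinearIndependent ℂ u) :
    coordMat u * colMat u = 1 := by
  rw [coordMat, Matrix.mul_assoc, ← gram_eq_colMat, inv_gram_mul_gram hu]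

lemma coordMat_mul_conjTranspose {u : Θ → Fin n → ℂ} (hu : LinearIndependent ℂ u) :
    coordMat u * (coordMat u)ᴴ = (gram u)⁻¹ := by
  rw [coordMat, conjTranspose_mul, conjTranspose_conjTranspose, (posDef_gram hu).inv.1.eq,
    Matrix.mul_assoc, ← Matrix.mul_assoc (colMat u)ᴴ, ← gram_eq_colMat,
    ← Matrix.mul_assoc, inv_gram_mul_gram hu, Matrix.one_mul]

lemma colMat_mul_coordMat {u : Θ → Fin n → ℂ} (hu : LinearIndependent ℂ u)
    (hus : Submodule.span ℂ (Set.range u) = ⊤) : colMat u * coordMat u = 1 := by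
  refine ext_iff_mulVec.mpr fun x => ?_
  obtain ⟨c, rfl⟩ : ∃ c, colMat u *ᵥ c = x := by
    simpa [colMat_mulVec] using
      (Submodule.mem_span_range_iff_exists_fun ℂ).mp (hus ▸ Submodule.mem_top : x ∈ _)
  rw [mulVec_mulVec, Matrix.mul_assoc, coordMat_mul_colMat hu, Matrix.mul_one, one_mulVec]

lemma posSemidef_one_sub_colMat_iff {v : Θ → Fin m → ℂ} (hv : LinearIndependent ℂ v)
    (hvs : Submodule.span ℂ (Set.range v) = ⊤) (M : Matrix Θ Θ ℂ) :
    (1 - colMat v * M * (colMat v)ᴴ).PosSemidef ↔ ((gram v)⁻¹ - M).PosSemidef := by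
  have hV : colMat v * (gram v)⁻¹ * (colMat v)ᴴ = 1 := by
    rw [Matrix.mul_assoc, ← coordMat, colMat_mul_coordMat hv hvs]
  have hC : coordMat v * (1 - colMat v * M * (colMat v)ᴴ) * (coordMat v)ᴴ = (gram v)⁻¹ - M := by
    rw [Matrix.mul_sub, Matrix.sub_mul, Matrix.mul_one, coordMat_mul_conjTranspose hv,
      ← Matrix.mul_assoc, ← Matrix.mul_assoc, coordMat_mul_colMat hv, Matrix.one_mul,
      Matrix.mul_assoc, ← conjTranspose_mul, coordMat_mul_colMat hv, conjTranspose_one,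
      Matrix.mul_one]
  constructor
  · intro h
    simpa only [hC] using h.mul_mul_conjTranspose_same (coordMat v)
  · intro h
    simpa only [Matrix.mul_sub, Matrix.sub_mul, hV] using h.mul_mul_conjTranspose_same (colMat v)

end

lemma mul_outer_mul_conjTranspose {n m : ℕ} (W : Matrix (Fin m) (Fin n) ℂ) (a : Fin n → ℂ) :
    W * outer a * Wᴴ = outer (W *ᵥ a) := by
  rw [outer, mul_vecMulVec, vecMulVec_mul, outer, star_mulVec]

lemma outer_smul {n : ℕ} (c : ℂ) (a : Fin n → ℂ) : outer (c • a) = (c * star c) • outer a := by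
  rw [outer, outer, star_smul, smul_vecMulVec, vecMulVec_smul, smul_smul]

lemma outer_eq_zero_iff {n : ℕ} {a : Fin n → ℂ} : outer a = 0 ↔ a = 0 := by
  simp [outer]

lemma trace_outer {n : ℕ} (a : Fin n → ℂ) : (outer a).trace = star a ⬝ᵥ a := by
  rw [outer, trace_vecMulVec, dotProduct_comm]

lemma eq_zero_of_sum_outer_eq_zero {κ : Type*} [Fintype κ] {n : ℕ} {x : κ → Fin n → ℂ}
    (h : ∑ i, outer (x i) = 0) (i : κ) : x i = 0 := by
  have htr : ∑ i, star (x i) ⬝ᵥ x i = 0 := by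
    simpa [trace_sum, trace_outer] using congrArg trace h
  rw [sum_eq_zero_iff_of_nonneg fun i _ => dotProduct_star_self_nonneg (x i)] at htr
  exact dotProduct_star_self_eq_zero.mp (htr i (mem_univ i))

lemma exists_smul_of_sum_outer_eq_outer {κ : Type*} [Fintype κ] {n : ℕ} {x : κ → Fin n → ℂ}
    {v : Fin n → ℂ} (hv : v ≠ 0) (h : ∑ i, outer (x i) = outer v) :
    ∃ c : κ → ℂ, (∀ i, x i = c i • v) ∧ ∑ i, c i * star (c i) = 1 := by
  set t := star v ⬝ᵥ v
  have ht : t ≠ 0 := fun h0 => hv (dotProduct_star_self_eq_zero.mp h0)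
  let c i := t⁻¹ * (star v ⬝ᵥ x i)
  -- Conjugating `h` by the orthogonal projection `Q` onto `v⊥` kills its right-hand side.
  set Q : Matrix (Fin n) (Fin n) ℂ := 1 - t⁻¹ • outer v
  have hQ y : Q *ᵥ y = y - (t⁻¹ * (star v ⬝ᵥ y)) • v := by
    simp only [Q, sub_mulVec, one_mulVec, smul_mulVec, outer, vecMulVec_mulVec, op_smul_eq_smul,
      smul_smul]
  have hQv : Q *ᵥ v = 0 := by
    rw [hQ, inv_mul_cancel₀ ht, one_smul, sub_self]
  have hQx : ∑ i, outer (Q *ᵥ x i) = 0 := by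
    simp_rw [← mul_outer_mul_conjTranspose, ← sum_mul, ← mul_sum, h,
      mul_outer_mul_conjTranspose, hQv, outer_eq_zero_iff]
  have hx i : x i = c i • v :=
    sub_eq_zero.mp ((hQ _).symm.trans (eq_zero_of_sum_outer_eq_zero hQx i))
  refine ⟨c, hx, smul_left_injective ℂ (outer_eq_zero_iff.not.mpr hv) ?_⟩
  simp only [sum_smul, ← outer_smul, ← hx, h, one_smul]

def krausMap {ι ι' κ : Type*} [Fintype ι] [Fintype κ] (W : κ → Matrix ι' ι ℂ) :
    Matrix ι ι ℂ →ₗ[ℂ] Matrix ι' ι' ℂ where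
  toFun X := ∑ i, W i * X * (W i)ᴴ
  map_add' X Y := by simp only [Matrix.mul_add, Matrix.add_mul, sum_add_distrib]
  map_smul' c X := by simp only [Matrix.mul_smul, Matrix.smul_mul, smul_sum, RingHom.id_apply]

lemma krausMap_apply {ι ι' κ : Type*} [Fintype ι] [Fintype κ] (W : κ → Matrix ι' ι ℂ)
    (X : Matrix ι ι ℂ) : krausMap W X = ∑ i, W i * X * (W i)ᴴ := rfl

lemma isCPMap_iff_exists_eq_krausMap {n m : ℕ}
    {Λ : Matrix (Fin n) (Fin n) ℂ →ₗ[ℂ] Matrix (Fin m) (Fin m) ℂ} :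
    IsCPMap Λ ↔ ∃ (k : ℕ) (W : Fin k → Matrix (Fin m) (Fin n) ℂ), Λ = krausMap W :=
  exists₂_congr fun _ _ =>
    ⟨fun h => LinearMap.ext fun X => (h X).trans (krausMap_apply _ X).symm,
      fun h X => by rw [h, krausMap_apply]⟩

lemma sum_diagonal_mul_mul_conjTranspose {ι κ R : Type*} [Fintype ι] [Fintype κ] [DecidableEq ι]
    [CommSemiring R] [StarRing R] (D : Matrix ι κ R) (A : Matrix ι ι R) :
    ∑ i, diagonal (Dᵀ i) * A * (diagonal (Dᵀ i))ᴴ = (D * Dᴴ) ⊙ A := by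
  ext θ σ
  simp only [Matrix.sum_apply, diagonal_conjTranspose, mul_diagonal, diagonal_mul, hadamard_apply]
  simp only [mul_apply, transpose_apply, conjTranspose_apply, Pi.star_apply, sum_mul]
  exact sum_congr rfl fun i _ => by ring

section transferOp

variable {Θ : Type*} [Fintype Θ] [DecidableEq Θ] {n m : ℕ}

def transferOp (u : Θ → Fin n → ℂ) (v : Θ → Fin m → ℂ) (d : Θ → ℂ) :
    Matrix (Fin m) (Fin n) ℂ :=
  colMat v * diagonal d * coordMat u

variable {u : Θ → Fin n → ℂ} (v : Θ → Fin m → ℂ)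

lemma transferOp_mulVec (hu : LinearIndependent ℂ u) (d : Θ → ℂ) (θ : Θ) :
    transferOp u v d *ᵥ u θ = d θ • v θ := by
  have h : transferOp u v d * colMat u = colMat v * diagonal d := by
    rw [transferOp, Matrix.mul_assoc, coordMat_mul_colMat hu, Matrix.mul_one]
  rw [mul_colMat, colMat_mul_diagonal] at h
  exact congrFun (colMat_injective h) θ

lemma eq_transferOp (hu : LinearIndependent ℂ u) (hus : Submodule.span ℂ (Set.range u) = ⊤)
    {W : Matrix (Fin m) (Fin n) ℂ} {d : Θ → ℂ} (hW : ∀ θ, W *ᵥ u θ = d θ • v θ) :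
    W = transferOp u v d := by
  rw [transferOp, colMat_mul_diagonal, ← funext hW, ← mul_colMat, Matrix.mul_assoc,
    colMat_mul_coordMat hu hus, Matrix.mul_one]

lemma krausMap_transferOp_one (hu : LinearIndependent ℂ u) {κ : Type*} [Fintype κ]
    (D : Matrix Θ κ ℂ) :
    krausMap (fun i => transferOp u v (Dᵀ i)) 1 =
      colMat v * ((D * Dᴴ) ⊙ (gram u)⁻¹) * (colMat v)ᴴ := by
  simp only [krausMap_apply, Matrix.mul_one, transferOp, conjTranspose_mul, Matrix.mul_assoc]
  simp only [← Matrix.mul_assoc (coordMat u), coordMat_mul_conjTranspose hu]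
  simp only [← sum_diagonal_mul_mul_conjTranspose, Matrix.mul_sum, Matrix.sum_mul,
    Matrix.mul_assoc]

lemma krausMap_transferOp_outer (hu : LinearIndependent ℂ u) {κ : Type*} [Fintype κ]
    (D : Matrix Θ κ ℂ) (θ : Θ) :
    krausMap (fun i => transferOp u v (Dᵀ i)) (outer (u θ)) = (D * Dᴴ) θ θ • outer (v θ) := by
  simp only [krausMap_apply, mul_outer_mul_conjTranspose, transferOp_mulVec v hu, outer_smul,
    ← sum_smul, mul_apply, conjTranspose_apply, transpose_apply]

end transferOp

open scoped MatrixOrder in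
lemma Matrix.PosSemidef.exists_eq_mul_conjTranspose_fin {Θ : Type*} [Fintype Θ]
    {H : Matrix Θ Θ ℂ} (hH : H.PosSemidef) :
    ∃ D : Matrix Θ (Fin (Fintype.card Θ)) ℂ, H = D * Dᴴ := by
  classical
  obtain ⟨B, rfl⟩ := CStarAlgebra.nonneg_iff_eq_star_mul_self.mp hH.nonneg
  refine ⟨Bᴴ.submatrix id (Fintype.equivFin Θ).symm, ?_⟩
  rw [conjTranspose_submatrix, conjTranspose_conjTranspose, submatrix_mul_equiv, submatrix_id_id]
  rfl

theorem stmt3 {Θ : Type*} [Fintype Θ] [DecidableEq Θ] {n m : ℕ}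
    (u : Θ → (Fin n → ℂ)) (v : Θ → (Fin m → ℂ))
    (hu : LinearIndependent ℂ u) (hv : LinearIndependent ℂ v)
    (hus : Submodule.span ℂ (Set.range u) = ⊤)
    (hvs : Submodule.span ℂ (Set.range v) = ⊤) :
    (∃ Λ : Matrix (Fin n) (Fin n) ℂ →ₗ[ℂ] Matrix (Fin m) (Fin m) ℂ,
        IsCPMap Λ ∧ IsSubunital Λ ∧ ∀ θ, Λ (outer (u θ)) = outer (v θ)) ↔
      ∃ H : Matrix Θ Θ ℂ, H.PosSemidef ∧ (∀ θ, H θ θ = 1) ∧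
        ((gram v)⁻¹ - Matrix.hadamard H (gram u)⁻¹).PosSemidef := by
  constructor
  · rintro ⟨Λ, hCP, hsub, hΛ⟩
    obtain ⟨k, W, rfl⟩ := isCPMap_iff_exists_eq_krausMap.mp hCP
    have hrank θ : ∑ i, outer (W i *ᵥ u θ) = outer (v θ) := by
      simpa only [krausMap_apply, mul_outer_mul_conjTranspose] using hΛ θ
    choose c hc hnorm using fun θ => exists_smul_of_sum_outer_eq_outer (hv.ne_zero θ) (hrank θ)
    let D : Matrix Θ (Fin k) ℂ := Matrix.of c
    have hW : W = fun i => transferOp u v (Dᵀ i) :=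
      funext fun i => eq_transferOp v hu hus fun θ => hc θ i
    refine ⟨D * Dᴴ, posSemidef_self_mul_conjTranspose D, hnorm, ?_⟩
    rw [← posSemidef_one_sub_colMat_iff hv hvs, ← krausMap_transferOp_one v hu, ← hW]
    exact hsub
  · rintro ⟨H, hH, hdiag, hle⟩
    obtain ⟨D, rfl⟩ := hH.exists_eq_mul_conjTranspose_fin
    refine ⟨krausMap fun i => transferOp u v (Dᵀ i),
      isCPMap_iff_exists_eq_krausMap.mpr ⟨_, _, rfl⟩, ?_, fun θ => ?_⟩
    · rwa [IsSubunital, krausMap_transferOp_one v hu, posSemidef_one_sub_colMat_iff hv hvs]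
    · rw [krausMap_transferOp_outer v hu, hdiag, one_smul]
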